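/- arXiv:1802.10454 — 2 statements merged into one kernel-verified Lean document; each statement's English description precedes it below -/
import Mathlib

section
/- Let T be a linear operator defined on a linear subspace D(T) of a complex Hilbert space H such that ‖Tv‖ ≤ ‖v‖ for all v ∈ D(T), 1 is not an eigenvalue of T (i.e., Tv = v implies v = 0), and the range of I − T, namely {v − Tv : v ∈ D(T)}, is dense in H. Then there is a unique linear operator L with domain D(L) = {v − Tv : v ∈ D(T)} satisfying L(v − Tv) = i(v + Tv) for all v ∈ D(T). This operator L is densely defined and dissipative, and T is its Cayley transform: for every v ∈ D(T) one has (L + iI)(v − Tv) = 2iv and (L − iI)(v − Tv) = 2iTv, so that Range(L + iI) = D(T). -/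
/- STATEMENT 1: If `T` is a contraction on a subspace `D(T)` of a complex Hilbert
space, `1` is not an eigenvalue of `T`, and `Range(I − T)` is dense, then there is a
unique linear operator `L` with domain `Range(I − T)` satisfying
`L(v − Tv) = i(v + Tv)`; this `L` is densely defined and dissipative (inner product
linear in the first argument, so their `⟨Lu, u⟩` is Mathlib's `⟪u, Lu⟫`), and `T` is
its Cayley transform: `(L + iI)(v − Tv) = 2iv`, `(L − iI)(v − Tv) = 2iTv`, and
`Range(L + iI) = D(T)`. -/
theorem stmt_1 {H : Type*} [NormedAddCommGroup H] [InnerProductSpace ℂ H]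
    [CompleteSpace H]
    (DT : Submodule ℂ H) (T : DT →ₗ[ℂ] H)
    (hT : ∀ v : DT, ‖T v‖ ≤ ‖(v : H)‖)
    (h1 : ∀ v : DT, T v = (v : H) → v = 0)
    (hdense : Dense ((LinearMap.range (DT.subtype - T) : Submodule ℂ H) : Set H)) :
    (∃! L : (LinearMap.range (DT.subtype - T)) →ₗ[ℂ] H,
        ∀ v : DT, L ⟨(v : H) - T v, ⟨v, by simp⟩⟩ = Complex.I • ((v : H) + T v)) ∧
    ∀ L : (LinearMap.range (DT.subtype - T)) →ₗ[ℂ] H,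
      (∀ v : DT, L ⟨(v : H) - T v, ⟨v, by simp⟩⟩ = Complex.I • ((v : H) + T v)) →
      (Dense ((LinearMap.range (DT.subtype - T) : Submodule ℂ H) : Set H) ∧
       (∀ u : LinearMap.range (DT.subtype - T), 0 ≤ (inner ℂ (u : H) (L u) : ℂ).im) ∧
       (∀ v : DT, L ⟨(v : H) - T v, ⟨v, by simp⟩⟩ + Complex.I • ((v : H) - T v)
           = (2 * Complex.I) • (v : H)) ∧
       (∀ v : DT, L ⟨(v : H) - T v, ⟨v, by simp⟩⟩ - Complex.I • ((v : H) - T v)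
           = (2 * Complex.I) • T v) ∧
       (∀ w : H, (∃ u : LinearMap.range (DT.subtype - T),
           L u + Complex.I • (u : H) = w) ↔ w ∈ DT)) := by
  set S := DT.subtype - T with hS
  have hSapp : ∀ v : DT, S v = (v : H) - T v := by intro v; simp [hS]
  have hinj : Function.Injective S := by
    intro v w h
    have h0 : S (v - w) = 0 := by rw [map_sub, h, sub_self]
    have h2 : T (v - w) = ((v - w : DT) : H) := by
      have h3 := hSapp (v - w)
      rw [h0] at h3
      exact (sub_eq_zero.mp h3.symm).symm
    exact sub_eq_zero.mp (h1 _ h2)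
  have hinj' : Function.Injective S.rangeRestrict := by
    intro a b h
    apply hinj
    have := congrArg Subtype.val h
    simpa using this
  let e : DT ≃ₗ[ℂ] LinearMap.range S :=
    LinearEquiv.ofBijective S.rangeRestrict ⟨hinj', S.surjective_rangeRestrict⟩
  have hrr : ∀ v : DT, S.rangeRestrict v = ⟨(v : H) - T v, ⟨v, by simp [hS]⟩⟩ := by
    intro v; ext; simpa using hSapp v
  let L₀ : (LinearMap.range S) →ₗ[ℂ] H :=
    (Complex.I • (DT.subtype + T)) ∘ₗ (e.symm : LinearMap.range S →ₗ[ℂ] DT)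
  have hL₀ : ∀ v : DT, L₀ ⟨(v : H) - T v, ⟨v, by simp [hS]⟩⟩
      = Complex.I • ((v : H) + T v) := by
    intro v
    have h : e.symm ⟨(v : H) - T v, ⟨v, by simp [hS]⟩⟩ = v := by
      rw [← hrr v]; exact e.symm_apply_apply v
    simp [L₀, h]
  have key : ∀ (L : (LinearMap.range S) →ₗ[ℂ] H),
      (∀ v : DT, L ⟨(v : H) - T v, ⟨v, by simp [hS]⟩⟩ = Complex.I • ((v : H) + T v)) →
      ∀ u, L u = Complex.I • ((e.symm u : H) + T (e.symm u)) := by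
    intro L hL u
    obtain ⟨v, hv⟩ := S.surjective_rangeRestrict u
    have hv' : e.symm u = v := by rw [← hv]; exact e.symm_apply_apply v
    rw [hv', ← hv, hrr v]; exact hL v
  constructor
  · refine ⟨L₀, hL₀, ?_⟩
    intro L hL
    ext u
    rw [key L hL u, key L₀ hL₀ u]
  · intro L hL
    refine ⟨hdense, ?_, ?_, ?_, ?_⟩
    · intro u
      obtain ⟨v, hv⟩ := S.surjective_rangeRestrict u
      have hu : (u : H) = (v : H) - T v := by rw [← hv]; simpa using hSapp v
      have hLu : L u = Complex.I • ((v : H) + T v) := by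
        rw [← hv, hrr v]; exact hL v
      rw [hu, hLu, inner_smul_right]
      have him : (Complex.I * inner ℂ ((v:H) - T v) ((v:H) + T v)).im
          = (inner ℂ ((v:H) - T v) ((v:H) + T v) : ℂ).re := by
        simp [Complex.mul_im]
      rw [him]
      have hre : (inner ℂ ((v:H) - T v) ((v:H) + T v) : ℂ).re
          = ‖(v:H)‖^2 - ‖T v‖^2 := by
        simp only [inner_sub_left, inner_add_right, Complex.sub_re, Complex.add_re]
        have e1 : (inner ℂ ((v:H)) ((v:H)) : ℂ).re = ‖(v:H)‖^2 := by
          rw [inner_self_eq_norm_sq_to_K]; norm_cast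
        have e2 : (inner ℂ (T v) (T v) : ℂ).re = ‖T v‖^2 := by
          rw [inner_self_eq_norm_sq_to_K]; norm_cast
        have e3 : (inner ℂ ((v:H)) (T v) : ℂ).re = (inner ℂ (T v) ((v:H)) : ℂ).re := by
          rw [← inner_conj_symm ((v:H)) (T v), Complex.conj_re]
        rw [e1, e2, e3]; ring
      rw [hre]
      have := hT v
      nlinarith [norm_nonneg (T v), norm_nonneg ((v:H))]
    · intro v
      rw [hL v, ← smul_add]
      have hcomb : ((v:H) + T v) + ((v:H) - T v) = (2:ℂ) • (v:H) := by
        rw [two_smul]; abel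
      rw [hcomb, smul_smul, mul_comm]
    · intro v
      rw [hL v, ← smul_sub]
      have hcomb : ((v:H) + T v) - ((v:H) - T v) = (2:ℂ) • T v := by
        rw [two_smul]; abel
      rw [hcomb, smul_smul, mul_comm]
    · intro w
      constructor
      · rintro ⟨u, hu⟩
        obtain ⟨v, hv⟩ := S.surjective_rangeRestrict u
        have hu' : (u : H) = (v : H) - T v := by rw [← hv]; simpa using hSapp v
        have hLu : L u = Complex.I • ((v : H) + T v) := by
          rw [← hv, hrr v]; exact hL v
        rw [hu', hLu, ← smul_add] at hu
        have hcomb : ((v:H) + T v) + ((v:H) - T v) = (2:ℂ) • (v:H) := by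
          rw [two_smul]; abel
        rw [hcomb, smul_smul] at hu
        rw [← hu]
        exact DT.smul_mem _ v.2
      · intro hw
        set v : DT := (2 * Complex.I)⁻¹ • ⟨w, hw⟩ with hv
        refine ⟨S.rangeRestrict v, ?_⟩
        have hcoe : ((S.rangeRestrict v : H)) = (v : H) - T v := by simpa using hSapp v
        have h3 : L (S.rangeRestrict v) = Complex.I • ((v:H) + T v) := by
          rw [hrr]; exact hL v
        rw [hcoe, h3, ← smul_add]
        have hcomb : ((v:H) + T v) + ((v:H) - T v) = (2:ℂ) • (v:H) := by
          rw [two_smul]; abel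
        rw [hcomb, smul_smul]
        have hvw : (v : H) = (2 * Complex.I)⁻¹ • w := rfl
        have h2i : (2 * Complex.I) ≠ 0 := by simp [Complex.I_ne_zero]
        rw [hvw, smul_smul, mul_comm Complex.I 2, mul_inv_cancel₀ h2i, one_smul]
end

section
/- Every densely defined dissipative operator L on a complex Hilbert space H has a maximal dissipative extension: there exists a dissipative operator L' with D(L) ⊆ D(L'), L'u = Lu for all u ∈ D(L), such that L' has no dissipative extension with strictly larger domain (equivalently, Range(L' + iI) = H). -/
set_option maxHeartbeats 1000000

/-- A (possibly unbounded) operator `L` with domain the submodule `D` is dissipative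
if `Im ⟨Lu, u⟩ ≥ 0` on its domain (the inner product of the paper is linear in the
first argument, so their `⟨Lu, u⟩` is Mathlib's `⟪u, Lu⟫`). -/
def IsDissipative {H : Type*} [NormedAddCommGroup H] [InnerProductSpace ℂ H]
    (D : Submodule ℂ H) (L : D →ₗ[ℂ] H) : Prop :=
  ∀ u : D, 0 ≤ (inner ℂ (u : H) (L u) : ℂ).im

/-- `(D', L')` is an extension of `(D, L)`: `D ⊆ D'` and `L'` agrees with `L` on `D`. -/
def IsExtensionOf {H : Type*} [NormedAddCommGroup H] [InnerProductSpace ℂ H]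
    (D : Submodule ℂ H) (L : D →ₗ[ℂ] H)
    (D' : Submodule ℂ H) (L' : D' →ₗ[ℂ] H) : Prop :=
  ∃ h : D ≤ D', ∀ u : D, L' ⟨(u : H), h u.2⟩ = L u

section
variable {H : Type*} [NormedAddCommGroup H] [InnerProductSpace ℂ H]

local notation "⟪" x ", " y "⟫" => @inner ℂ _ _ x y

lemma diss_sq {D : Submodule ℂ H} (L : D →ₗ[ℂ] H) (u : D) :
    ‖L u + Complex.I • (u:H)‖^2 = ‖L u‖^2 + ‖(u:H)‖^2 + 2 * (⟪(u:H), L u⟫).im ∧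
    ‖L u - Complex.I • (u:H)‖^2 = ‖L u‖^2 + ‖(u:H)‖^2 - 2 * (⟪(u:H), L u⟫).im := by
  have h1 : RCLike.re (⟪L u, Complex.I • (u:H)⟫ : ℂ) = (⟪(u:H), L u⟫ : ℂ).im := by
    rw [inner_smul_right]
    have h := inner_conj_symm (𝕜 := ℂ) (L u) (u:H)
    have h2 : (⟪L u, (u:H)⟫ : ℂ).im = -(⟪(u:H), L u⟫ : ℂ).im := by
      rw [← h]; exact Complex.conj_im _
    simp [Complex.mul_re, h2, RCLike.re]
  constructor
  · rw [@norm_add_sq ℂ, h1]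
    simp [norm_smul]; ring
  · rw [sub_eq_add_neg, @norm_add_sq ℂ]
    rw [inner_neg_right, map_neg, h1]
    simp [norm_smul]
    ring

lemma of_sq_le {a b : ℝ} (ha : 0 ≤ a) (h : a^2 ≤ b^2) (hb : 0 ≤ b) : a ≤ b := by
  nlinarith

lemma diss_norm_bound {D : Submodule ℂ H} {L : D →ₗ[ℂ] H} (h : IsDissipative D L) (u : D) :
    ‖(u:H)‖ ≤ ‖L u + Complex.I • (u:H)‖ := by
  refine of_sq_le (norm_nonneg _) ?_ (norm_nonneg _)
  rw [(diss_sq L u).1]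
  have := h u
  nlinarith [sq_nonneg ‖L u‖]

lemma diss_norm_bound' {D : Submodule ℂ H} {L : D →ₗ[ℂ] H} (h : IsDissipative D L) (u : D) :
    ‖L u - Complex.I • (u:H)‖ ≤ ‖L u + Complex.I • (u:H)‖ := by
  refine of_sq_le (norm_nonneg _) ?_ (norm_nonneg _)
  rw [(diss_sq L u).1, (diss_sq L u).2]
  have := h u
  nlinarith

end

section
variable {H : Type*} [NormedAddCommGroup H] [InnerProductSpace ℂ H] [CompleteSpace H]

local notation "⟪" x ", " y "⟫" => @inner ℂ _ _ x y

lemma cayley_contraction (D : Submodule ℂ H) (L : D →ₗ[ℂ] H)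
    (hdiss : IsDissipative D L) :
    ∃ W : H →L[ℂ] H, ‖W‖ ≤ 1 ∧
      ∀ u : D, W (L u + Complex.I • (u:H)) = L u - Complex.I • (u:H) := by
  classical
  set T : D →ₗ[ℂ] H := L + Complex.I • D.subtype with hTdef
  set S : D →ₗ[ℂ] H := L - Complex.I • D.subtype with hSdef
  have hTapp : ∀ u : D, T u = L u + Complex.I • (u:H) := fun u => rfl
  have hSapp : ∀ u : D, S u = L u - Complex.I • (u:H) := fun u => rfl
  have hTnorm : ∀ u : D, ‖(u:H)‖ ≤ ‖T u‖ := fun u => diss_norm_bound hdiss u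
  have hSnorm : ∀ u : D, ‖S u‖ ≤ ‖T u‖ := fun u => diss_norm_bound' hdiss u
  have hTinj : Function.Injective T := by
    intro u v huv
    have h0 : T (u - v) = 0 := by rw [map_sub, huv, sub_self]
    have := hTnorm (u - v)
    rw [h0, norm_zero] at this
    have : ((u - v : D) : H) = 0 := norm_le_zero_iff.mp this
    have : (u : H) = (v : H) := by
      rwa [Submodule.coe_sub, sub_eq_zero] at this
    exact Subtype.ext this
  -- the Cayley transform on the range of T
  set eT := LinearEquiv.ofInjective T hTinj with heT
  set V₀ : (LinearMap.range T) →ₗ[ℂ] H := S ∘ₗ (eT.symm : LinearMap.range T →ₗ[ℂ] D) with hV₀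
  have hV₀app : ∀ u : D, V₀ (eT u) = S u := by
    intro u; simp [hV₀]
  have hV₀bound : ∀ x : LinearMap.range T, ‖V₀ x‖ ≤ 1 * ‖x‖ := by
    intro x
    obtain ⟨u, hu⟩ : ∃ u : D, eT u = x := ⟨eT.symm x, eT.apply_symm_apply x⟩
    have hcoe : (x : H) = T u := by rw [← hu]; rfl
    have hVx : V₀ x = S u := by rw [← hu, hV₀app]
    have hxn : ‖x‖ = ‖T u‖ := by
      have : ‖x‖ = ‖(x:H)‖ := rfl
      rw [this, hcoe]
    rw [hVx, one_mul, hxn]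
    exact hSnorm u
  set V₁ : (LinearMap.range T) →L[ℂ] H := V₀.mkContinuous 1 hV₀bound with hV₁
  set M := (LinearMap.range T).topologicalClosure with hM
  -- inclusion of range T into M
  set e₀ : (LinearMap.range T) →ₗ[ℂ] M :=
    Submodule.inclusion (LinearMap.range T).le_topologicalClosure with he₀
  have he₀norm : ∀ x : LinearMap.range T, ‖e₀ x‖ = ‖x‖ := fun x => rfl
  set e : (LinearMap.range T) →L[ℂ] M := e₀.mkContinuous 1 (by
    intro x; rw [he₀norm, one_mul]) with he
  have h_dense : DenseRange e := by
    intro y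
    rw [closure_subtype]
    have himg : Subtype.val '' Set.range e = ((LinearMap.range T : Submodule ℂ H) : Set H) := by
      ext z
      constructor
      · rintro ⟨w, ⟨x, rfl⟩, rfl⟩
        exact x.2
      · rintro hz
        exact ⟨e ⟨z, hz⟩, ⟨⟨z, hz⟩, rfl⟩, rfl⟩
    rw [himg]
    exact y.2
  have h_e : ∀ x : LinearMap.range T, ‖x‖ ≤ (1:NNReal) * ‖e x‖ := by
    intro x; rw [NNReal.coe_one, one_mul]; rfl
  set Vbar : M →L[ℂ] H :=
    V₁.extend e
    with hVbar
  have hVbar_norm : ‖Vbar‖ ≤ 1 := by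
    have := ContinuousLinearMap.opNorm_extend_le V₁ h_dense h_e
    have h1 : ‖V₁‖ ≤ 1 := V₀.mkContinuous_norm_le zero_le_one hV₀bound
    calc ‖Vbar‖ ≤ (1:NNReal) * ‖V₁‖ := this
    _ ≤ 1 := by rw [NNReal.coe_one, one_mul]; exact h1
  have hVbar_eq : ∀ x : LinearMap.range T, Vbar (e x) = V₁ x :=
    fun x => ContinuousLinearMap.extend_eq V₁ h_dense (ContinuousLinearMap.isUniformEmbedding_of_bound e h_e).isUniformInducing x
  set P := Submodule.orthogonalProjection M with hP
  set W : H →L[ℂ] H := Vbar.comp P with hW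
  have hWnorm : ∀ x : H, ‖W x‖ ≤ ‖x‖ := by
    intro x
    calc ‖W x‖ = ‖Vbar (P x)‖ := rfl
    _ ≤ ‖Vbar‖ * ‖P x‖ := Vbar.le_opNorm _
    _ ≤ 1 * ‖x‖ := by
        refine mul_le_mul hVbar_norm ?_ (norm_nonneg _) zero_le_one
        calc ‖P x‖ ≤ ‖P‖ * ‖x‖ := P.le_opNorm x
        _ ≤ 1 * ‖x‖ := mul_le_mul_of_nonneg_right (Submodule.orthogonalProjection_norm_le M) (norm_nonneg _)
        _ = ‖x‖ := one_mul _
    _ = ‖x‖ := one_mul _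
  have hWop : ‖W‖ ≤ 1 := W.opNorm_le_bound zero_le_one (by intro x; rw [one_mul]; exact hWnorm x)
  have hWT : ∀ u : D, W (T u) = S u := by
    intro u
    have hmr : T u ∈ LinearMap.range T := ⟨u, rfl⟩
    have hm : T u ∈ M := (LinearMap.range T).le_topologicalClosure hmr
    have hPTu : P (T u) = ⟨T u, hm⟩ :=
      Submodule.orthogonalProjection_mem_subspace_eq_self (⟨T u, hm⟩ : M)
    have hee : e ⟨T u, hmr⟩ = ⟨T u, hm⟩ := rfl
    have heTu : eT u = ⟨T u, hmr⟩ := by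
      apply Subtype.ext
      simp [heT]
    calc W (T u) = Vbar (P (T u)) := rfl
    _ = Vbar (e ⟨T u, hmr⟩) := by rw [hPTu, hee]
    _ = V₁ ⟨T u, hmr⟩ := hVbar_eq _
    _ = V₀ ⟨T u, hmr⟩ := rfl
    _ = V₀ (eT u) := by rw [heTu]
    _ = S u := hV₀app u
  exact ⟨W, hWop, fun u => hWT u⟩

theorem stmt_3_aux (D : Submodule ℂ H) (hD : Dense (D : Set H)) (L : D →ₗ[ℂ] H)
    (hdiss : IsDissipative D L) :
    ∃ (D' : Submodule ℂ H) (L' : D' →ₗ[ℂ] H),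
      IsDissipative D' L' ∧
      (∃ h : D ≤ D', ∀ u : D, L' ⟨(u : H), h u.2⟩ = L u) ∧
      (∀ x : H, ∃ u : D', L' u + Complex.I • (u : H) = x) := by
  obtain ⟨W, hWop, hWT⟩ := cayley_contraction D L hdiss
  have hWnorm : ∀ x : H, ‖W x‖ ≤ ‖x‖ := by
    intro x
    calc ‖W x‖ ≤ ‖W‖ * ‖x‖ := W.le_opNorm x
    _ ≤ 1 * ‖x‖ := mul_le_mul_of_nonneg_right hWop (norm_nonneg _)
    _ = ‖x‖ := one_mul _
  have h2I : (2 * Complex.I) ≠ 0 := by simp [Complex.I_ne_zero]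
  have hdiff : ∀ u : D,
      (L u + Complex.I • (u:H)) - (L u - Complex.I • (u:H)) = (2 * Complex.I) • (u:H) := by
    intro u
    rw [two_mul, add_smul]
    abel
  have hsum : ∀ u : D,
      (L u + Complex.I • (u:H)) + (L u - Complex.I • (u:H)) = (2 : ℂ) • L u := by
    intro u
    rw [two_smul]
    abel
  -- fixed points of W are zero
  have hfix : ∀ v : H, W v = v → v = 0 := by
    intro v hv
    set Wa := ContinuousLinearMap.adjoint W with hWa
    have hWa_norm : ‖Wa‖ ≤ 1 := by
      rw [hWa, LinearIsometryEquiv.norm_map ContinuousLinearMap.adjoint W]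
      exact hWop
    have hWav : Wa v = v := by
      have key : ‖Wa v - v‖^2 ≤ 0 := by
        rw [@norm_sub_sq ℂ]
        have h1 : RCLike.re (⟪Wa v, v⟫ : ℂ) = ‖v‖^2 := by
          rw [ContinuousLinearMap.adjoint_inner_left, hv]
          simpa using (inner_self_eq_norm_sq (𝕜 := ℂ) v)
        have h2 : ‖Wa v‖ ≤ ‖v‖ := by
          calc ‖Wa v‖ ≤ ‖Wa‖ * ‖v‖ := Wa.le_opNorm v
          _ ≤ 1 * ‖v‖ := mul_le_mul_of_nonneg_right hWa_norm (norm_nonneg _)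
          _ = ‖v‖ := one_mul _
        nlinarith [norm_nonneg (Wa v), norm_nonneg v]
      have h3 := sq_nonneg ‖Wa v - v‖
      have h0 : ‖Wa v - v‖^2 = 0 := le_antisymm key h3
      have h4 : ‖Wa v - v‖ = 0 := by nlinarith
      exact sub_eq_zero.mp (norm_eq_zero.mp h4)
    have horth : ∀ u : D, (⟪v, (u:H)⟫ : ℂ) = 0 := by
      intro u
      have h1 : (⟪v, L u + Complex.I • (u:H)⟫ : ℂ)
          - ⟪v, W (L u + Complex.I • (u:H))⟫ = 0 := by
        rw [← ContinuousLinearMap.adjoint_inner_left W, hWav, sub_self]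
      rw [hWT u, ← inner_sub_right, hdiff u, inner_smul_right] at h1
      exact (mul_eq_zero.mp h1).resolve_left h2I
    have hclosed : IsClosed {x : H | (⟪v, x⟫ : ℂ) = 0} :=
      isClosed_eq (continuous_const.inner continuous_id) continuous_const
    have hsub : (D : Set H) ⊆ {x : H | (⟪v, x⟫ : ℂ) = 0} := fun x hx => horth ⟨x, hx⟩
    have hall : (⟪v, v⟫ : ℂ) = 0 := by
      have : closure (D : Set H) ⊆ {x : H | (⟪v, x⟫ : ℂ) = 0} :=
        closure_minimal hsub hclosed
      exact this (hD.closure_eq ▸ Set.mem_univ v)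
    exact inner_self_eq_zero.mp hall
  -- the extension
  set A : H →ₗ[ℂ] H := LinearMap.id - (W : H →ₗ[ℂ] H) with hA
  have hAapp : ∀ v : H, A v = v - W v := fun v => rfl
  have hAinj : Function.Injective A := by
    intro x y hxy
    have h0 : A (x - y) = 0 := by rw [map_sub, hxy, sub_self]
    rw [hAapp, sub_eq_zero] at h0
    have := hfix (x - y) h0.symm
    exact sub_eq_zero.mp this
  set eA := LinearEquiv.ofInjective A hAinj with heA
  have heAcoe : ∀ v : H, ((eA v : LinearMap.range A) : H) = A v := by
    intro v
    rw [heA]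
    exact rfl
  set B : H →ₗ[ℂ] H := Complex.I • (LinearMap.id + (W : H →ₗ[ℂ] H)) with hB
  have hBapp : ∀ v : H, B v = Complex.I • (v + W v) := fun v => rfl
  set L' : (LinearMap.range A) →ₗ[ℂ] H := B ∘ₗ (eA.symm : LinearMap.range A →ₗ[ℂ] H) with hL'
  have hL'app : ∀ v : H, L' (eA v) = B v := by
    intro v
    rw [hL']
    simp
  refine ⟨LinearMap.range A, L', ?_, ?_, ?_⟩
  · -- dissipative
    intro x
    obtain ⟨v, hv⟩ : ∃ v : H, eA v = x := ⟨eA.symm x, eA.apply_symm_apply x⟩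
    have hxc : (x : H) = v - W v := by rw [← hv, heAcoe, hAapp]
    have hLx : L' x = Complex.I • (v + W v) := by rw [← hv, hL'app, hBapp]
    rw [hxc, hLx, inner_smul_right]
    have expand : (⟪v - W v, v + W v⟫ : ℂ)
        = ⟪v, v⟫ + ⟪v, W v⟫ - ⟪W v, v⟫ - ⟪W v, W v⟫ := by
      rw [inner_sub_left, inner_add_right, inner_add_right]
      ring
    have hre : (⟪v - W v, v + W v⟫ : ℂ).re = ‖v‖^2 - ‖W v‖^2 := by
      rw [expand]
      have e1 : (⟪v, v⟫ : ℂ).re = ‖v‖^2 := by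
        simpa using (inner_self_eq_norm_sq (𝕜 := ℂ) v)
      have e2 : (⟪W v, W v⟫ : ℂ).re = ‖W v‖^2 := by
        simpa using (inner_self_eq_norm_sq (𝕜 := ℂ) (W v))
      have e3 : (⟪W v, v⟫ : ℂ).re = (⟪v, W v⟫ : ℂ).re := by
        rw [← inner_conj_symm (𝕜 := ℂ) v (W v)]
        exact Complex.conj_re _
      simp [Complex.sub_re, Complex.add_re, e1, e2, e3]
      simp only [← Complex.ofReal_pow, Complex.ofReal_re]
    have him : (Complex.I * ⟪v - W v, v + W v⟫).im = (⟪v - W v, v + W v⟫ : ℂ).re := by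
      simp [Complex.mul_im]
    rw [him, hre]
    have := hWnorm v
    nlinarith [norm_nonneg (W v), norm_nonneg v]
  · -- extension
    have key2 : ∀ u : D, A ((2 * Complex.I)⁻¹ • (L u + Complex.I • (u:H))) = (u:H) := by
      intro u
      rw [map_smul, hAapp, hWT u, hdiff u, smul_smul, inv_mul_cancel₀ h2I, one_smul]
    have hle : D ≤ LinearMap.range A := by
      intro x hx
      exact ⟨(2 * Complex.I)⁻¹ • (L ⟨x, hx⟩ + Complex.I • x), key2 ⟨x, hx⟩⟩
    refine ⟨hle, ?_⟩
    intro u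
    have hmem : (⟨(u : H), hle u.2⟩ : LinearMap.range A)
        = eA ((2 * Complex.I)⁻¹ • (L u + Complex.I • (u:H))) := by
      apply Subtype.ext
      rw [heAcoe, key2 u]
    rw [hmem, hL'app, hBapp]
    rw [map_smul, hWT u, ← smul_add, hsum u, smul_smul, smul_smul]
    have hc : Complex.I * (2 * Complex.I)⁻¹ * 2 = 1 := by
      field_simp
    rw [hc, one_smul]
  · -- surjectivity of L' + iI
    intro x
    refine ⟨eA ((2 * Complex.I)⁻¹ • x), ?_⟩
    rw [hL'app, hBapp, heAcoe, hAapp]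
    set v := (2 * Complex.I)⁻¹ • x with hv
    have : Complex.I • (v + W v) + Complex.I • (v - W v) = (2 * Complex.I) • v := by
      rw [← smul_add]
      have : (v + W v) + (v - W v) = (2:ℂ) • v := by rw [two_smul]; abel
      rw [this, smul_smul]
      ring_nf
    rw [this, hv, smul_smul, mul_inv_cancel₀ h2I, one_smul]

end

theorem stmt_3 {H : Type*} [NormedAddCommGroup H] [InnerProductSpace ℂ H]
    [CompleteSpace H]
    (D : Submodule ℂ H) (hD : Dense (D : Set H)) (L : D →ₗ[ℂ] H)
    (hdiss : IsDissipative D L) :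
    ∃ (D' : Submodule ℂ H) (L' : D' →ₗ[ℂ] H),
      IsDissipative D' L' ∧ IsExtensionOf D L D' L' ∧
      (∀ (D'' : Submodule ℂ H) (L'' : D'' →ₗ[ℂ] H),
          IsDissipative D'' L'' → IsExtensionOf D' L' D'' L'' → D'' = D') ∧
      (∀ x : H, ∃ u : D', L' u + Complex.I • (u : H) = x) := by
  obtain ⟨D', L', hd', hext, hsurj⟩ := stmt_3_aux D hD L hdiss
  refine ⟨D', L', hd', hext, ?_, hsurj⟩
  rintro D'' L'' hd'' ⟨hle'', hagree''⟩
  refine le_antisymm (fun x hx => ?_) hle''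
  set u : D'' := ⟨x, hx⟩ with hu
  obtain ⟨w, hw⟩ := hsurj (L'' u + Complex.I • x)
  have hwmem : (w : H) ∈ D'' := hle'' w.2
  have hag : L'' ⟨(w : H), hwmem⟩ = L' w := hagree'' w
  set z : D'' := u - ⟨(w : H), hwmem⟩ with hz
  have hzc : (z : H) = x - (w : H) := rfl
  have hz0 : L'' z + Complex.I • (z : H) = 0 := by
    rw [hz, map_sub, hag, hzc, smul_sub]
    have : L'' u - L' w + (Complex.I • x - Complex.I • (w : H))
        = (L'' u + Complex.I • x) - (L' w + Complex.I • (w : H)) := by abel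
    rw [this, hw]
    simp [hu]
  have hb := diss_norm_bound hd'' z
  rw [hz0, norm_zero] at hb
  have hz00 : (z : H) = 0 := norm_le_zero_iff.mp hb
  have hxw : x = (w : H) := by
    rw [hzc] at hz00
    exact sub_eq_zero.mp hz00
  rw [hxw]
  exact w.2
end
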